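/- For every finite string W over {A, X, B}, one has |(AXAW)| = 2t·|[W]| + |[XAWA]|, where |(·)| denotes the cyclic value and |[·]| the locked value in the tight puzzle. -/

import Mathlib

/-!
The "tight puzzle" of Schwartz–Tabachnikov.  Strings over the alphabet `{A, X, B}`;
word list (coefficient, weight): `X (1,0)`, `XA (1,1)`, `XAA (1,1)`, `AXA (2,1)`,
`AAA (-1,1)`, `BA (-1,1)`, `ABA (-1,1)`, `XXA (-1,1)`; in a parsing the word `X` may
never be immediately followed by the word `XA` or the word `BA`.
-/

open scoped Classical

/-- The three-letter alphabet. -/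
inductive PLetter | A | X | B
deriving DecidableEq

/-- Strings over the alphabet. -/
abbrev PWord := List PLetter

/-- The tight puzzle word list. -/
def tightWords : List PWord :=
  [[PLetter.X], [PLetter.X, PLetter.A], [PLetter.X, PLetter.A, PLetter.A],
   [PLetter.A, PLetter.X, PLetter.A], [PLetter.A, PLetter.A, PLetter.A],
   [PLetter.B, PLetter.A], [PLetter.A, PLetter.B, PLetter.A],
   [PLetter.X, PLetter.X, PLetter.A]]

/-- Coefficients of the words of the tight puzzle (`AXA ↦ 2`; `AAA, BA, ABA, XXA ↦ -1`;
`X, XA, XAA ↦ 1`). -/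
def tightCoeff (w : PWord) : ℤ :=
  if w = [PLetter.A, PLetter.X, PLetter.A] then 2
  else if w = [PLetter.A, PLetter.A, PLetter.A] ∨ w = [PLetter.B, PLetter.A] ∨
      w = [PLetter.A, PLetter.B, PLetter.A] ∨ w = [PLetter.X, PLetter.X, PLetter.A] then -1
  else 1

/-- Weights of the words: the word `X` has weight `0`, all other words weight `1`. -/
def wordWt (w : PWord) : ℕ := if w = [PLetter.X] then 0 else 1

/-- The forbidden adjacency: the word `X` immediately followed by `XA` or `BA`. -/
def Bad (u v : PWord) : Prop :=
  u = [PLetter.X] ∧ (v = [PLetter.X, PLetter.A] ∨ v = [PLetter.B, PLetter.A])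

/-- The contribution `coefficient · t^weight ∈ ℤ[t]` of a parsing `L`. -/
noncomputable def parseVal (c : PWord → ℤ) (L : List PWord) : Polynomial ℤ :=
  Polynomial.C ((L.map c).prod) * Polynomial.X ^ ((L.map wordWt).sum)

/-- `L` is a parsing in the tight puzzle: all its words are on the word list and the
forbidden adjacency never occurs. -/
def TightChain (L : List PWord) : Prop :=
  (∀ w ∈ L, w ∈ tightWords) ∧ List.Chain' (fun u v => ¬ Bad u v) L

/-- The *core* of a string: what remains after deleting all leading and trailing `X`s. -/
def core (s : PWord) : PWord :=
  ((s.dropWhile (· == PLetter.X)).reverse.dropWhile (· == PLetter.X)).reverse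

/-- `L` is a parsing of the bi-infinite string `⋯XX·W·XX⋯` (with the infinitely many
padding `X`s parsed as copies of the word `X` and trimmed away): the words of `L`
concatenate to `W` up to padding by `X`s on either side, `L` neither starts nor ends
with the word `X`, and (because of the padding `X`-words on the left) the first word
of `L` is not `XA` or `BA`. -/
def IsOpenParsing (W : PWord) (L : List PWord) : Prop :=
  TightChain L ∧ core L.flatten = core W ∧
  ∀ h : L ≠ [],
    L.head h ≠ [PLetter.X] ∧ L.head h ≠ [PLetter.X, PLetter.A] ∧
    L.head h ≠ [PLetter.B, PLetter.A] ∧ L.getLast h ≠ [PLetter.X]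

/-- `(r, L)` is a parsing of the cyclic string `(W)`: reading the necklace of the
letters of `W` starting at position `r`, the words of `L` concatenate to it, the
forbidden adjacency does not occur (cyclically), and `r < (last word).length`
(so that every parsing of the necklace is counted exactly once). -/
def IsCyclicParsing (W : PWord) (r : ℕ) (L : List PWord) : Prop :=
  TightChain L ∧
  ∃ h : L ≠ [], L.flatten = W.rotate r ∧ r < (L.getLast h).length ∧
    ¬ Bad (L.getLast h) (L.head h)

/-- `L` is a parsing of the locked string `[W]`: the words of `L` concatenate exactly
to `W`, no padding allowed. -/
def IsLockedParsing (W : PWord) (L : List PWord) : Prop :=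
  TightChain L ∧ L.flatten = W

/-- The nine words of both puzzles, as a function (used to enumerate parsings). -/
def wordOf : Fin 9 → PWord :=
  ![[PLetter.X], [PLetter.X, PLetter.A], [PLetter.X, PLetter.A, PLetter.A],
    [PLetter.X, PLetter.B, PLetter.A], [PLetter.A, PLetter.X, PLetter.A],
    [PLetter.A, PLetter.A, PLetter.A], [PLetter.B, PLetter.A],
    [PLetter.A, PLetter.B, PLetter.A], [PLetter.X, PLetter.X, PLetter.A]]

/-- The open value `|W| ∈ ℤ[t]`: the sum of `coefficient · t^weight` over all parsings
of the bi-infinite string `⋯XX·W·XX⋯` (any such parsing consists of at most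
`W.length + 2` words). -/
noncomputable def openVal (W : PWord) : Polynomial ℤ :=
  ∑ k ∈ Finset.range (W.length + 3), ∑ f : Fin k → Fin 9,
    if IsOpenParsing W ((List.ofFn f).map wordOf) then
      parseVal tightCoeff ((List.ofFn f).map wordOf)
    else 0

/-- The cyclic value `|(W)| ∈ ℤ[t]`: the sum of `coefficient · t^weight` over all
parsings of the cyclic string `(W)`. -/
noncomputable def cycVal (W : PWord) : Polynomial ℤ :=
  ∑ r ∈ Finset.range W.length, ∑ k ∈ Finset.range (W.length + 1), ∑ f : Fin k → Fin 9,
    if IsCyclicParsing W r ((List.ofFn f).map wordOf) then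
      parseVal tightCoeff ((List.ofFn f).map wordOf)
    else 0

/-- The locked value `|[W]| ∈ ℤ[t]`: the sum of `coefficient · t^weight` over all
parsings whose concatenation is exactly `W`. -/
noncomputable def lockVal (W : PWord) : Polynomial ℤ :=
  ∑ k ∈ Finset.range (W.length + 1), ∑ f : Fin k → Fin 9,
    if IsLockedParsing W ((List.ofFn f).map wordOf) then
      parseVal tightCoeff ((List.ofFn f).map wordOf)
    else 0


/-!
A cyclic parsing `(r, L)` of `(AXAW)` reads the necklace from position `r`, which lies
inside the last word, so `r < 3`. For `r = 0` the first word can only be `AXA` and the rest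
is a locked parsing of `W`; this contributes `2t·|[W]|`. For `r = 1` the cyclic parsings are
exactly the locked parsings of the rotation `XAWA`: their last word ends in the final `A`,
so it is neither the word `X` nor the start of a forbidden adjacency. For `r = 2` the last
word has length `3` and ends in `A`, but the rotation `AWAX` ends in `X`.
-/

noncomputable def parsingSum (c : PWord → ℤ) (P : List PWord → Prop) (N : ℕ) :
    Polynomial ℤ :=
  ∑ k ∈ Finset.range N, ∑ f : Fin k → Fin 9,
    if P ((List.ofFn f).map wordOf) then parseVal c ((List.ofFn f).map wordOf) else 0

lemma lockVal_eq_parsingSum (W : PWord) :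
    lockVal W = parsingSum tightCoeff (IsLockedParsing W) (W.length + 1) := rfl

lemma cycVal_eq_sum_parsingSum (W : PWord) :
    cycVal W = ∑ r ∈ Finset.range W.length,
      parsingSum tightCoeff (IsCyclicParsing W r) (W.length + 1) := rfl

lemma parseVal_cons (c : PWord → ℤ) (w : PWord) (L : List PWord) :
    parseVal c (w :: L) = Polynomial.C (c w) * Polynomial.X ^ wordWt w * parseVal c L := by
  simp only [parseVal, List.map_cons, List.prod_cons, List.sum_cons, Polynomial.C_mul, pow_add]
  ring

lemma wordOf_injective : Function.Injective wordOf := by decide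

section parsingSum

variable (c : PWord → ℤ) (P : List PWord → Prop)

lemma parsingSum_eq_zero (hP : ∀ L, ¬ P L) (N : ℕ) : parsingSum c P N = 0 :=
  Finset.sum_eq_zero fun _ _ => Finset.sum_eq_zero fun _ _ => if_neg (hP _)

lemma parsingSum_of_length_lt {N N' : ℕ} (hP : ∀ L, P L → L.length < N) (hN : N ≤ N') :
    parsingSum c P N' = parsingSum c P N := by
  refine (Finset.sum_subset (Finset.range_subset_range.mpr hN) fun k _ hk => ?_).symm
  refine Finset.sum_eq_zero fun f _ => if_neg fun hf => hk ?_
  simpa using hP _ hf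

lemma parsingSum_cons (i : Fin 9) (N : ℕ) :
    parsingSum c (fun L => ∃ M, L = wordOf i :: M ∧ P M) (N + 1) =
      Polynomial.C (c (wordOf i)) * Polynomial.X ^ wordWt (wordOf i) * parsingSum c P N := by
  rw [parsingSum, Finset.sum_range_succ', parsingSum, Finset.mul_sum]
  simp only [List.ofFn_zero, List.map_nil, reduceCtorEq, false_and, exists_false,
    if_false, Finset.sum_const_zero, add_zero]
  refine Finset.sum_congr rfl fun k _ => ?_
  rw [← (Fin.consEquiv fun _ => Fin 9).sum_comp, Fintype.sum_prod_type_right, Finset.mul_sum]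
  refine Finset.sum_congr rfl fun g _ => ?_
  have hcond : ∀ j : Fin 9,
      (∃ M, wordOf j :: (List.ofFn g).map wordOf = wordOf i :: M ∧ P M) ↔
        j = i ∧ P ((List.ofFn g).map wordOf) := by
    simp [wordOf_injective.eq_iff]
  have hcons : ∀ j, (Fin.consEquiv fun _ => Fin 9) (j, g) = Fin.cons j g := fun _ => rfl
  simp only [hcons, List.ofFn_cons, List.map_cons, hcond, ite_and,
    Finset.sum_ite_eq', Finset.mem_univ, if_true]
  split_ifs
  · rw [parseVal_cons]
  · rw [mul_zero]

end parsingSum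

open PLetter

lemma eq_X_or_getLast?_eq_A_of_mem_tightWords {w : PWord} (hw : w ∈ tightWords) :
    w = [X] ∨ 2 ≤ w.length ∧ w.length ≤ 3 ∧ w.getLast? = some A := by
  revert w
  decide

lemma length_pos_of_mem_tightWords {w : PWord} (hw : w ∈ tightWords) : 0 < w.length := by
  rcases eq_X_or_getLast?_eq_A_of_mem_tightWords hw with rfl | ⟨h, -⟩
  · exact Nat.one_pos
  · omega

lemma IsLockedParsing.length_le {W : PWord} {L : List PWord} (h : IsLockedParsing W L) :
    L.length ≤ W.length := by
  rw [← h.2, List.length_flatten]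
  simpa using List.length_le_sum_of_one_le (L.map List.length) fun n hn => by
    obtain ⟨w, hw, rfl⟩ := List.mem_map.mp hn
    exact length_pos_of_mem_tightWords (h.1.1 w hw)

lemma getLast?_flatten_of_getLast_ne_nil {α : Type*} {L : List (List α)} (hL : L ≠ [])
    (hw : L.getLast hL ≠ []) : L.flatten.getLast? = (L.getLast hL).getLast? := by
  obtain ⟨L', w, rfl⟩ := (List.eq_nil_or_concat L).resolve_left hL
  simp only [List.concat_eq_append, List.getLast_append_singleton, List.flatten_append,
    List.flatten_singleton, List.getLast?_append] at hw ⊢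
  rw [List.getLast?_eq_some_getLast hw, Option.some_or]

lemma tightChain_AXA_cons_iff {M : List PWord} : TightChain ([A, X, A] :: M) ↔ TightChain M :=
  and_congr (by simp [tightWords])
    (List.isChain_cons.trans (and_iff_right fun _ _ => by simp [Bad]))

lemma isCyclicParsing_AXA_zero_iff (W : PWord) (L : List PWord) :
    IsCyclicParsing ([A, X, A] ++ W) 0 L ↔ ∃ M, L = [A, X, A] :: M ∧ IsLockedParsing W M := by
  constructor
  · rintro ⟨hL, hne, hflat, -, -⟩
    obtain ⟨w, M, rfl⟩ := List.exists_cons_of_ne_nil hne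
    have hw : w ∈ tightWords := hL.1 w List.mem_cons_self
    rw [List.rotate_zero, List.flatten_cons] at hflat
    obtain rfl : w = [A, X, A] := by
      simp only [tightWords, List.mem_cons, List.not_mem_nil, or_false] at hw
      rcases hw with rfl | rfl | rfl | rfl | rfl | rfl | rfl | rfl <;> simp_all
    exact ⟨M, rfl, tightChain_AXA_cons_iff.mp hL, by simpa using hflat⟩
  · rintro ⟨M, rfl, hM, hflat⟩
    have hL := tightChain_AXA_cons_iff.mpr hM
    refine ⟨hL, List.cons_ne_nil _ _, by simp [hflat], ?_, by simp [Bad]⟩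
    exact length_pos_of_mem_tightWords (hL.1 _ (List.getLast_mem _))

lemma isCyclicParsing_AXA_one_iff (W : PWord) (L : List PWord) :
    IsCyclicParsing ([A, X, A] ++ W) 1 L ↔ IsLockedParsing ([X, A] ++ W ++ [A]) L := by
  have hrot : ([A, X, A] ++ W).rotate 1 = [X, A] ++ W ++ [A] := by
    simp [List.rotate_eq_drop_append_take]
  refine ⟨fun ⟨hL, _, hflat, _⟩ => ⟨hL, hflat.trans hrot⟩, fun ⟨hL, hflat⟩ => ?_⟩
  have hne : L ≠ [] := by rintro rfl; simp at hflat
  have hlast := hL.1 _ (List.getLast_mem hne)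
  have hX : L.getLast hne ≠ [X] := fun h => by
    have := getLast?_flatten_of_getLast_ne_nil hne (by simp [h])
    simp [hflat, h, List.getLast?_cons] at this
  obtain ⟨h2, -⟩ := (eq_X_or_getLast?_eq_A_of_mem_tightWords hlast).resolve_left hX
  exact ⟨hL, hne, hflat.trans hrot.symm, h2, fun h => hX h.1⟩

lemma not_isCyclicParsing_AXA_of_two_le (W : PWord) (L : List PWord) {r : ℕ} (hr : 2 ≤ r) :
    ¬ IsCyclicParsing ([A, X, A] ++ W) r L := by
  rintro ⟨hL, hne, hflat, hlt, -⟩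
  have hlast := hL.1 _ (List.getLast_mem hne)
  obtain ⟨-, h3, hA⟩ := (eq_X_or_getLast?_eq_A_of_mem_tightWords hlast).resolve_left
    fun h => by simp [h] at hlt; omega
  obtain rfl : r = 2 := by omega
  have := getLast?_flatten_of_getLast_ne_nil hne (by simp [← List.length_pos_iff]; omega)
  simp [hflat, hA, List.rotate_eq_drop_append_take, List.getLast?_cons] at this

open PLetter in
/-- For every finite string `W`, `|(AXAW)| = 2t·|[W]| + |[XAWA]|` (cyclic vs. locked
values in the tight puzzle). -/
theorem cyclic_AXA (W : PWord) :
    cycVal ([A, X, A] ++ W) =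
      2 * Polynomial.X * lockVal W + lockVal ([X, A] ++ W ++ [A]) := by
  have hlen : ([A, X, A] ++ W).length = W.length + 1 + 2 := by simp
  have h0 : parsingSum tightCoeff (IsCyclicParsing ([A, X, A] ++ W) 0) (W.length + 4) =
      2 * Polynomial.X * lockVal W := by
    rw [funext fun L => propext (isCyclicParsing_AXA_zero_iff W L),
      show [A, X, A] = wordOf 4 from rfl, parsingSum_cons tightCoeff _ 4, lockVal_eq_parsingSum,
      parsingSum_of_length_lt _ _ (fun L hL => Nat.lt_succ_of_le hL.length_le)
        (by omega : W.length + 1 ≤ W.length + 3)]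
    simp [wordOf, tightCoeff, wordWt]
  have h1 : parsingSum tightCoeff (IsCyclicParsing ([A, X, A] ++ W) 1) (W.length + 4) =
      lockVal ([X, A] ++ W ++ [A]) := by
    rw [funext fun L => propext (isCyclicParsing_AXA_one_iff W L), lockVal_eq_parsingSum]
    simp
  rw [cycVal_eq_sum_parsingSum, hlen, Finset.sum_range_succ', Finset.sum_range_succ',
    Finset.sum_eq_zero fun r _ => parsingSum_eq_zero _ _
      (not_isCyclicParsing_AXA_of_two_le W · (by omega)) _]
  rw [h0, h1]
  ring
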